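/- Let m be a positive integer and let 𝒟(m) be any decomposition of m as a sum of Fibonacci Quilt numbers with nonnegative integer coefficients, m = c_1 q_1 + c_2 q_2 + … + c_n q_n with c_i ∈ {0, 1, 2, …}, whose number of summands is c_1 + c_2 + … + c_n. Then the number of summands of the Greedy-6 decomposition 𝒢(m) is at most the number of summands of 𝒟(m). -/

import Mathlib

open scoped BigOperators

/-- A finite set of indices is FQ-legal: distinct indices never differ by 1, 3 or 4,
and the set does not contain both 1 and 3. -/
def FQLegal (L : Finset ℕ) : Prop :=
  (∀ i ∈ L, ∀ j ∈ L, i ≠ j →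
    max i j - min i j ≠ 1 ∧ max i j - min i j ≠ 3 ∧ max i j - min i j ≠ 4) ∧
  ¬ (1 ∈ L ∧ 3 ∈ L)

/-- `m` has an FQ-legal decomposition using only `q_1, …, q_{i-1}`. -/
def FQRepr (q : ℕ → ℕ) (i m : ℕ) : Prop :=
  ∃ L : Finset ℕ, (∀ j ∈ L, 1 ≤ j ∧ j < i) ∧ FQLegal L ∧ (∑ j ∈ L, q j) = m

/-- `q` (1-indexed) is the Fibonacci Quilt sequence: `q 1 = 1` and for `i ≥ 2`,
`q i` is the smallest positive integer having no FQ-legal decomposition using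
`{q_1, …, q_{i-1}}`. -/
def IsFQSeq (q : ℕ → ℕ) : Prop :=
  q 1 = 1 ∧ ∀ i, 2 ≤ i → IsLeast {m : ℕ | 0 < m ∧ ¬ FQRepr q i m} (q i)

/-- `IsGreedy6 q L m` : the list `L` (indices of summands, largest first) is the output of
the Greedy-6 algorithm on `m`: if `m = q n` stop with `[n]`; if `m = 6` output `[4, 2]`
(i.e. `q 4 + q 2`); otherwise, if `m ≥ q 6` and `m` is not a Fibonacci Quilt number,
take the index `ℓ` with `q ℓ < m < q (ℓ+1)` and recurse on `m - q ℓ`. -/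
def IsGreedy6 (q : ℕ → ℕ) : List ℕ → ℕ → Prop
  | [], m => m = 0
  | ℓ :: rest, m =>
      (rest = [] ∧ 1 ≤ ℓ ∧ m = q ℓ) ∨
      (m = 6 ∧ ℓ = 4 ∧ rest = [2]) ∨
      ((∀ n, 1 ≤ n → q n ≠ m) ∧ q 6 ≤ m ∧ 1 ≤ ℓ ∧ q ℓ < m ∧ m < q (ℓ + 1) ∧
        IsGreedy6 q rest (m - q ℓ))

/-! The sequence defined by `q (n + 7) = q (n + 6) + q (n + 2)` (whence also
`q (n + 6) = q (n + 4) + q (n + 3)`) is the Fibonacci Quilt sequence: the two recurrences show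
that `q i` has no legal decomposition with smaller indices, while every smaller number has one.

The heart of the matter is that adding one quilt number increases the length `greedyLen m` of the
Greedy-6 decomposition by at most one; building `m` one summand at a time then shows that any
decomposition has at least `greedyLen m` summands. The one-step bound goes by strong induction on
the sum, written as `q a + u` with `u < q (a + 1)`: either `a = i` and `u = m`, or `a = ℓ` and
`u = r + q i` after the greedy step `m = q ℓ + r`. Such a sum lies in `[q a, q (a + 3))`, and on
each of the three intervals between consecutive quilt numbers the greedy step on the sum is reduced
to the induction hypothesis by one of the recurrences. -/

open Finset

/-- The Fibonacci Quilt numbers `1, 2, 3, 4, 5, 7, 9, 12, 16, …`, given by their recurrence;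
`quilt 0 = 0` pads the 1-indexed sequence. -/
def quilt : ℕ → ℕ
  | 0 => 0
  | 1 => 1
  | 2 => 2
  | 3 => 3
  | 4 => 4
  | 5 => 5
  | 6 => 7
  | n + 7 => quilt (n + 6) + quilt (n + 2)

theorem quilt_add_seven (n : ℕ) : quilt (n + 7) = quilt (n + 6) + quilt (n + 2) := rfl

theorem quilt_add_six : ∀ n, quilt (n + 6) = quilt (n + 4) + quilt (n + 3)
  | 0 | 1 | 2 => rfl
  | n + 3 => by
    have h₁ : quilt (n + 7) = quilt (n + 5) + quilt (n + 4) := quilt_add_six (n + 1)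
    have h₂ : quilt (n + 8) = quilt (n + 6) + quilt (n + 5) := quilt_add_six (n + 2)
    have h₃ : quilt (n + 9) = quilt (n + 8) + quilt (n + 4) := quilt_add_seven (n + 2)
    change quilt (n + 9) = quilt (n + 7) + quilt (n + 6)
    omega

theorem quilt_lt_quilt_succ : ∀ n, quilt n < quilt (n + 1)
  | 0 | 1 | 2 | 3 | 4 | 5 | 6 => by decide
  | n + 7 => by
    have : quilt (n + 2) < quilt (n + 3) := quilt_lt_quilt_succ (n + 2)
    have : quilt (n + 8) = quilt (n + 7) + quilt (n + 3) := quilt_add_seven (n + 1)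
    change quilt (n + 7) < quilt (n + 8)
    omega

theorem quilt_strictMono : StrictMono quilt := strictMono_nat_of_lt_succ quilt_lt_quilt_succ

theorem self_le_quilt (n : ℕ) : n ≤ quilt n := quilt_strictMono.id_le n

theorem quilt_pos {n : ℕ} (hn : 1 ≤ n) : 0 < quilt n := quilt_strictMono hn

def quiltIndex (m : ℕ) : ℕ := Nat.findGreatest (fun ℓ => quilt ℓ ≤ m) m

theorem le_quiltIndex {ℓ m : ℕ} (h : quilt ℓ ≤ m) : ℓ ≤ quiltIndex m :=
  Nat.le_findGreatest ((self_le_quilt ℓ).trans h) h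

theorem quilt_quiltIndex_le (m : ℕ) : quilt (quiltIndex m) ≤ m :=
  Nat.findGreatest_spec (P := fun ℓ => quilt ℓ ≤ m) (Nat.zero_le m) (Nat.zero_le m)

theorem lt_quilt_quiltIndex_succ (m : ℕ) : m < quilt (quiltIndex m + 1) :=
  lt_of_not_ge fun h => (le_quiltIndex h).not_gt (Nat.lt_succ_self _)

theorem quiltIndex_eq {ℓ m : ℕ} (h₁ : quilt ℓ ≤ m) (h₂ : m < quilt (ℓ + 1)) :
    quiltIndex m = ℓ := by
  have h₃ := quilt_strictMono.lt_iff_lt.1 ((quilt_quiltIndex_le m).trans_lt h₂)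
  have h₄ := quilt_strictMono.lt_iff_lt.1 (h₁.trans_lt (lt_quilt_quiltIndex_succ m))
  omega

/-- The number of summands of Greedy-6, run with fuel `f`. Subtracting `quilt (quiltIndex m)`
also covers the case where `m` is a Fibonacci Quilt number: the remainder is then `0`. -/
def greedyLenAux : ℕ → ℕ → ℕ
  | 0, _ => 0
  | f + 1, m =>
    if m = 0 then 0 else if m = 6 then 2 else greedyLenAux f (m - quilt (quiltIndex m)) + 1

/-- Fuel `m` suffices, as every step decreases `m`; fuel rather than well-founded recursion keeps
`greedyLen` computable by `decide`. -/
def greedyLen (m : ℕ) : ℕ := greedyLenAux m m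

theorem sub_quilt_quiltIndex_lt {m : ℕ} (hm : m ≠ 0) : m - quilt (quiltIndex m) < m := by
  have := quilt_pos (le_quiltIndex (ℓ := 1) (Nat.one_le_iff_ne_zero.2 hm))
  omega

theorem greedyLenAux_eq_greedyLen : ∀ m f, m ≤ f → greedyLenAux f m = greedyLen m := by
  intro m
  induction m using Nat.strong_induction_on with
  | _ m ih =>
    intro f hf
    rcases Nat.eq_zero_or_pos m with rfl | hm
    · cases f <;> rfl
    obtain ⟨f, rfl⟩ : ∃ f', f = f' + 1 := ⟨f - 1, by omega⟩
    obtain ⟨k, rfl⟩ : ∃ k, m = k + 1 := ⟨m - 1, by omega⟩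
    have hlt := sub_quilt_quiltIndex_lt (m := k + 1) (by omega)
    simp only [greedyLen, greedyLenAux]
    rw [ih _ hlt f (by omega), ih _ hlt k (by omega)]

theorem greedyLen_eq {m : ℕ} (h₀ : m ≠ 0) (h₆ : m ≠ 6) :
    greedyLen m = greedyLen (m - quilt (quiltIndex m)) + 1 := by
  obtain ⟨k, rfl⟩ : ∃ k, m = k + 1 := ⟨m - 1, by omega⟩
  have hlt := sub_quilt_quiltIndex_lt (m := k + 1) (by omega)
  rw [greedyLen, greedyLenAux, if_neg h₀, if_neg h₆, greedyLenAux_eq_greedyLen _ _ (by omega)]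

theorem greedyLen_of_quilt_le_of_lt {ℓ m : ℕ} (hℓ : 1 ≤ ℓ) (h₁ : quilt ℓ ≤ m)
    (h₂ : m < quilt (ℓ + 1)) : greedyLen m = greedyLen (m - quilt ℓ) + 1 := by
  have hm := (quilt_pos hℓ).trans_le h₁
  by_cases h₆ : m = 6
  · -- the special decomposition `6 = q 4 + q 2` is as long as the greedy `6 = q 5 + q 1`
    subst h₆
    obtain rfl : ℓ = 5 := by
      have := quilt_strictMono.lt_iff_lt.1 (h₁.trans_lt (show 6 < quilt 6 by decide))
      have := quilt_strictMono.lt_iff_lt.1 ((show quilt 5 < 6 by decide).trans h₂)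
      omega
    decide
  · rw [greedyLen_eq hm.ne' h₆, quiltIndex_eq h₁ h₂]

theorem greedyLen_quilt {ℓ : ℕ} (hℓ : 1 ≤ ℓ) : greedyLen (quilt ℓ) = 1 := by
  rw [greedyLen_of_quilt_le_of_lt hℓ le_rfl (quilt_lt_quilt_succ ℓ), Nat.sub_self]
  rfl

theorem exists_quilt_add_eq (c : ℕ) {k : ℕ} (hk : k ≤ 2) :
    ∃ j, quilt (c + k) = quilt c + quilt j := by
  have small : ∀ c < 6, ∀ k ≤ 2, ∃ j < 6, quilt (c + k) = quilt c + quilt j := by decide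
  rcases lt_or_ge c 6 with hc | hc
  · obtain ⟨j, -, hj⟩ := small c hc k hk
    exact ⟨j, hj⟩
  obtain ⟨n, rfl⟩ : ∃ n, c = n + 6 := ⟨c - 6, by omega⟩
  interval_cases k
  · exact ⟨0, rfl⟩
  · exact ⟨n + 2, quilt_add_seven n⟩
  · exact ⟨n + 5, quilt_add_six (n + 2)⟩

def AddQuiltBoundBelow (N : ℕ) : Prop :=
  ∀ m i, m + quilt i < N → greedyLen (m + quilt i) ≤ greedyLen m + 1

theorem AddQuiltBoundBelow.mono {M N : ℕ} (h : AddQuiltBoundBelow N) (hMN : M ≤ N) :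
    AddQuiltBoundBelow M :=
  fun m i hm => h m i (hm.trans_le hMN)

/-- The greedy index `a` of `u` lies in `[c, c + 2]`, so `quilt a = quilt c + quilt j` and
`u - quilt c = (u - quilt a) + quilt j`. -/
theorem greedyLen_sub_quilt_le {u c : ℕ} (ih : AddQuiltBoundBelow u) (hc : 1 ≤ c)
    (h₁ : quilt c ≤ u) (h₂ : u < quilt (c + 3)) :
    greedyLen (u - quilt c) ≤ greedyLen u := by
  have ha₁ : c ≤ quiltIndex u := le_quiltIndex h₁
  have ha₂ : quiltIndex u < c + 3 :=
    quilt_strictMono.lt_iff_lt.1 ((quilt_quiltIndex_le u).trans_lt h₂)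
  obtain ⟨j, hj⟩ := exists_quilt_add_eq c (k := quiltIndex u - c) (by omega)
  rw [Nat.add_sub_cancel' ha₁] at hj
  have hsplit : u - quilt c = (u - quilt (quiltIndex u)) + quilt j := by
    have := quilt_quiltIndex_le u
    omega
  have := quilt_pos hc
  rw [greedyLen_of_quilt_le_of_lt (hc.trans ha₁) (quilt_quiltIndex_le u)
    (lt_quilt_quiltIndex_succ u), hsplit]
  exact ih _ _ (by omega)

theorem greedyLen_quilt_add_le {u n : ℕ} (ih : AddQuiltBoundBelow u) (hu : u < quilt (n + 7)) :
    greedyLen (quilt (n + 6) + u) ≤ greedyLen u + 1 := by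
  have e₇ : quilt (n + 7) = quilt (n + 6) + quilt (n + 2) := quilt_add_seven n
  have e₈ : quilt (n + 8) = quilt (n + 6) + quilt (n + 5) := quilt_add_six (n + 2)
  have e₉ : quilt (n + 9) = quilt (n + 7) + quilt (n + 6) := quilt_add_six (n + 3)
  have hlt : quilt (n + 7) < quilt (n + 8) := quilt_strictMono (by omega)
  rcases lt_or_ge (quilt (n + 6) + u) (quilt (n + 7)) with h₇ | h₇
  · rw [greedyLen_of_quilt_le_of_lt (by omega) (Nat.le_add_right _ _) h₇,
      Nat.add_sub_cancel_left]
  rcases lt_or_ge (quilt (n + 6) + u) (quilt (n + 8)) with h₈ | h₈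
  · rw [greedyLen_of_quilt_le_of_lt (by omega) h₇ h₈,
      show quilt (n + 6) + u - quilt (n + 7) = u - quilt (n + 2) by omega]
    have := greedyLen_sub_quilt_le ih (c := n + 2) (by omega) (by omega)
      (show u < quilt (n + 5) by omega)
    omega
  · rw [greedyLen_of_quilt_le_of_lt (by omega) h₈ (show _ < quilt (n + 9) by omega),
      show quilt (n + 6) + u - quilt (n + 8) = u - quilt (n + 5) by omega]
    have := greedyLen_sub_quilt_le ih (c := n + 5) (by omega) (by omega)
      (show u < quilt (n + 8) by omega)
    omega

theorem greedyLen_add_quilt_le_of_le {ℓ m i : ℕ} (ih : AddQuiltBoundBelow (m + quilt i))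
    (hℓ : 6 ≤ ℓ) (h₁ : quilt ℓ ≤ m) (h₂ : m < quilt (ℓ + 1)) (hi : i ≤ ℓ) :
    greedyLen (m + quilt i) ≤ greedyLen m + 1 := by
  obtain ⟨n, rfl⟩ : ∃ n, ℓ = n + 6 := ⟨ℓ - 6, by omega⟩
  change m < quilt (n + 7) at h₂
  have hQi : quilt i ≤ quilt (n + 6) := quilt_strictMono.monotone hi
  have hpos := quilt_pos (n := n + 6) (by omega)
  have e₇ : quilt (n + 7) = quilt (n + 6) + quilt (n + 2) := quilt_add_seven n
  set r := m - quilt (n + 6)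
  calc greedyLen (m + quilt i) = greedyLen (quilt (n + 6) + (r + quilt i)) := by
        congr 1
        omega
    _ ≤ greedyLen (r + quilt i) + 1 := greedyLen_quilt_add_le (ih.mono (by omega)) (by omega)
    _ ≤ greedyLen r + 1 + 1 := by
        have := ih r i (by omega)
        omega
    _ = greedyLen m + 1 := by rw [greedyLen_of_quilt_le_of_lt (by omega) h₁ h₂]

theorem greedyLen_add_quilt_le_of_bound {m i : ℕ} (ih : AddQuiltBoundBelow (m + quilt i)) :
    greedyLen (m + quilt i) ≤ greedyLen m + 1 := by
  rcases lt_or_ge i 6 with hi | hi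
  · rcases lt_or_ge m 7 with hm | hm
    · have small : ∀ m < 7, ∀ i < 6, greedyLen (m + quilt i) ≤ greedyLen m + 1 := by decide
      exact small m hm i hi
    · have := le_quiltIndex (ℓ := 6) hm
      exact greedyLen_add_quilt_le_of_le ih this (quilt_quiltIndex_le m)
        (lt_quilt_quiltIndex_succ m) (by omega)
  · rcases lt_or_ge m (quilt (i + 1)) with hm | hm
    · obtain ⟨n, rfl⟩ : ∃ n, i = n + 6 := ⟨i - 6, by omega⟩
      rw [add_comm]
      exact greedyLen_quilt_add_le (ih.mono (by omega)) hm
    · have := le_quiltIndex hm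
      exact greedyLen_add_quilt_le_of_le ih (by omega) (quilt_quiltIndex_le m)
        (lt_quilt_quiltIndex_succ m) (by omega)

theorem addQuiltBoundBelow : ∀ N, AddQuiltBoundBelow N
  | 0 => fun _ _ h => absurd h (Nat.not_lt_zero _)
  | N + 1 => fun m i h => (Nat.lt_succ_iff_lt_or_eq.1 h).elim (addQuiltBoundBelow N m i)
      fun hN => greedyLen_add_quilt_le_of_bound (hN ▸ addQuiltBoundBelow N)

theorem greedyLen_add_quilt_le (m i : ℕ) : greedyLen (m + quilt i) ≤ greedyLen m + 1 :=
  addQuiltBoundBelow _ m i (Nat.lt_succ_self _)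

theorem greedyLen_add_mul_quilt_le (m k i : ℕ) :
    greedyLen (m + k * quilt i) ≤ greedyLen m + k := by
  induction k with
  | zero => simp
  | succ k ih =>
    have := greedyLen_add_quilt_le (m + k * quilt i) i
    rw [add_mul, one_mul, ← add_assoc]
    omega

theorem greedyLen_sum_le (s : Finset ℕ) (c : ℕ → ℕ) :
    greedyLen (∑ i ∈ s, c i * quilt i) ≤ ∑ i ∈ s, c i := by
  induction s using Finset.induction_on with
  | empty => exact le_of_eq rfl
  | insert a s ha ih =>
    have := greedyLen_add_mul_quilt_le (∑ i ∈ s, c i * quilt i) (c a) a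
    rw [sum_insert ha, sum_insert ha, add_comm]
    omega

instance : DecidablePred FQLegal := fun L => by unfold FQLegal; infer_instance

theorem FQLegal.mono {L L' : Finset ℕ} (hL : FQLegal L) (h : L' ⊆ L) : FQLegal L' :=
  ⟨fun i hi j hj hij => hL.1 i (h hi) j (h hj) hij, fun h₁₃ => hL.2 ⟨h h₁₃.1, h h₁₃.2⟩⟩

theorem FQLegal.ne_add {L : Finset ℕ} (hL : FQLegal L) {a b : ℕ} (ha : a ∈ L) (hb : b ∈ L) :
    a ≠ b + 1 ∧ a ≠ b + 3 ∧ a ≠ b + 4 := by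
  have := hL.1 a ha b hb
  omega

theorem FQLegal.insert {L : Finset ℕ} (hL : FQLegal L) {a : ℕ} (ha : ∀ x ∈ L, x + 5 ≤ a) :
    FQLegal (insert a L) := by
  refine ⟨fun i hi j hj hij => ?_, fun ⟨h₁, h₃⟩ => ?_⟩
  · rcases mem_insert.1 hi with hi | hi <;> rcases mem_insert.1 hj with hj | hj
    · omega
    · have := ha j hj; omega
    · have := ha i hi; omega
    · exact hL.1 i hi j hj hij
  · rcases mem_insert.1 h₁ with h₁ | h₁ <;> rcases mem_insert.1 h₃ with h₃ | h₃
    · omega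
    · have := ha 3 h₃; omega
    · have := ha 1 h₁; omega
    · exact hL.2 ⟨h₁, h₃⟩

theorem fqLegal_singleton (a : ℕ) : FQLegal {a} := by
  simpa using (show FQLegal ∅ by decide).insert (a := a) (by simp)

theorem sum_quilt_lt_of_subset_Ico {k : ℕ} {L : Finset ℕ} (hL : FQLegal L) (hLk : L ⊆ Ico 1 k) :
    ∑ j ∈ L, quilt j < quilt (k + 2) := by
  induction k using Nat.strong_induction_on generalizing L with
  | _ k ih =>
  rcases lt_or_ge k 5 with hk | hk
  · have small : ∀ k < 5, ∀ L ∈ (Ico 1 k).powerset, FQLegal L →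
        ∑ j ∈ L, quilt j < quilt (k + 2) := by decide
    exact small k hk L (mem_powerset.2 hLk) hL
  obtain ⟨n, rfl⟩ : ∃ n, k = n + 5 := ⟨k - 5, by omega⟩
  change _ < quilt (n + 7)
  have e₇ : quilt (n + 7) = quilt (n + 6) + quilt (n + 2) := quilt_add_seven n
  have e₆ : quilt (n + 6) = quilt (n + 4) + quilt (n + 3) := quilt_add_six n
  have m₂₃ : quilt (n + 2) < quilt (n + 3) := quilt_lt_quilt_succ _
  by_cases htop : n + 4 ∈ L
  · have hlow : ∑ j ∈ L.filter (· < n), quilt j < quilt (n + 2) :=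
      ih n (by omega) (hL.mono (filter_subset _ _)) fun j hj => by
        have := hLk (mem_of_mem_filter j hj)
        simp only [mem_filter, mem_Ico] at hj this ⊢
        omega
    -- legality leaves only `n + 2` and `n + 4` among the indices `≥ n`
    have hhigh : ∑ j ∈ L.filter (¬ · < n), quilt j ≤ quilt (n + 4) + quilt (n + 2) := by
      rw [← sum_pair (show n + 4 ≠ n + 2 by omega)]
      refine sum_le_sum_of_subset fun j hj => ?_
      rw [mem_filter] at hj
      have := hL.ne_add htop hj.1
      have := mem_Ico.1 (hLk hj.1)
      simp only [mem_insert, mem_singleton]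
      omega
    rw [← sum_filter_add_sum_filter_not L (· < n)]
    omega
  · have hL' : L ⊆ Ico 1 (n + 4) := fun j hj => by
      have := mem_Ico.1 (hLk hj)
      have : j ≠ n + 4 := fun h => htop (h ▸ hj)
      exact mem_Ico.2 (by omega)
    have : ∑ j ∈ L, quilt j < quilt (n + 6) := ih (n + 4) (by omega) hL hL'
    have : quilt (n + 6) < quilt (n + 7) := quilt_lt_quilt_succ _
    omega

theorem subset_Ico_of_sum_quilt_eq {S : Finset ℕ} {b : ℕ} (hS : ∀ x ∈ S, 1 ≤ x) (hb : b ∉ S)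
    (hsum : ∑ x ∈ S, quilt x = quilt b) : S ⊆ Ico 1 b := fun x hx => by
  have hle : quilt x ≤ quilt b := hsum ▸ single_le_sum (fun _ _ => Nat.zero_le _) hx
  have hxb : x ≠ b := fun h => hb (h ▸ hx)
  exact mem_Ico.2 ⟨hS x hx, lt_of_le_of_ne (quilt_strictMono.le_iff_le.1 hle) hxb⟩

/-- If the top index `i - 1` or `i - 2` is used, the remaining summands would represent
`quilt (i - 5)` resp. `quilt (i - 3)` with smaller indices; otherwise the sum is too small. -/
theorem sum_quilt_ne_quilt {i : ℕ} (hi : 1 ≤ i) {L : Finset ℕ} (hL : FQLegal L)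
    (hLi : L ⊆ Ico 1 i) : ∑ j ∈ L, quilt j ≠ quilt i := by
  induction i using Nat.strong_induction_on generalizing L with
  | _ i ih =>
  rcases lt_or_ge i 7 with hi₇ | hi₇
  · have small : ∀ i < 7, 1 ≤ i → ∀ L ∈ (Ico 1 i).powerset, FQLegal L →
        ∑ j ∈ L, quilt j ≠ quilt i := by decide
    exact small i hi₇ hi L (mem_powerset.2 hLi) hL
  obtain ⟨n, rfl⟩ : ∃ n, i = n + 7 := ⟨i - 7, by omega⟩
  intro hsum
  have hpos : ∀ x ∈ L, 1 ≤ x := fun x hx => (mem_Ico.1 (hLi hx)).1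
  have hrest : ∀ a ∈ L, ∀ x ∈ L.erase a, 1 ≤ x := fun a _ x hx => hpos x (mem_of_mem_erase hx)
  by_cases h₆ : n + 6 ∈ L
  · have hsum' : ∑ x ∈ L.erase (n + 6), quilt x = quilt (n + 2) := by
      have := add_sum_erase L quilt h₆
      have := quilt_add_seven n
      omega
    have hb : n + 2 ∉ L.erase (n + 6) := fun h => (hL.ne_add h₆ (mem_of_mem_erase h)).2.2 rfl
    exact ih (n + 2) (by omega) (by omega) (hL.mono (erase_subset _ _))
      (subset_Ico_of_sum_quilt_eq (hrest _ h₆) hb hsum') hsum'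
  by_cases h₅ : n + 5 ∈ L
  · have hsum' : ∑ x ∈ L.erase (n + 5), quilt x = quilt (n + 4) := by
      have := add_sum_erase L quilt h₅
      have : quilt (n + 7) = quilt (n + 5) + quilt (n + 4) := quilt_add_six (n + 1)
      omega
    have hb : n + 4 ∉ L.erase (n + 5) := fun h => (hL.ne_add h₅ (mem_of_mem_erase h)).1 rfl
    exact ih (n + 4) (by omega) (by omega) (hL.mono (erase_subset _ _))
      (subset_Ico_of_sum_quilt_eq (hrest _ h₅) hb hsum') hsum'
  have hL' : L ⊆ Ico 1 (n + 5) := fun j hj => by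
    have := mem_Ico.1 (hLi hj)
    have : j ≠ n + 5 := fun h => h₅ (h ▸ hj)
    have : j ≠ n + 6 := fun h => h₆ (h ▸ hj)
    exact mem_Ico.2 (by omega)
  exact (sum_quilt_lt_of_subset_Ico hL hL').ne hsum

theorem exists_legal_sum_eq {m : ℕ} (hm : 0 < m) {i : ℕ} (hmi : m < quilt i) :
    ∃ L ⊆ Ico 1 i, FQLegal L ∧ ∑ j ∈ L, quilt j = m := by
  induction m using Nat.strong_induction_on generalizing i with
  | _ m ih =>
  obtain ⟨a, ha⟩ : ∃ a, quiltIndex m = a := ⟨_, rfl⟩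
  have h₁ : quilt a ≤ m := ha ▸ quilt_quiltIndex_le m
  have h₂ : m < quilt (a + 1) := ha ▸ lt_quilt_quiltIndex_succ m
  have hai : a < i := quilt_strictMono.lt_iff_lt.1 (h₁.trans_lt hmi)
  have ha₁ : 1 ≤ a := ha ▸ le_quiltIndex (ℓ := 1) hm
  rcases h₁.eq_or_lt with heq | hlt
  · exact ⟨{a}, by simp [hai, ha₁], fqLegal_singleton a, by simp [heq]⟩
  rcases lt_or_ge a 6 with ha₆ | ha₆
  · have small : ∀ m < 7, ∀ a < 6, quilt a < m → m < quilt (a + 1) → m = 6 := by decide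
    have hm₇ : m < quilt 6 := h₂.trans_le (quilt_strictMono.monotone (show a + 1 ≤ 6 by omega))
    obtain rfl := small m hm₇ a ha₆ hlt h₂
    have hi : 6 ≤ i := quilt_strictMono.lt_iff_lt.1 ((show quilt 5 < 6 by decide).trans hmi)
    refine ⟨{4, 2}, ?_, by decide, by decide⟩
    simp only [insert_subset_iff, singleton_subset_iff, mem_Ico]
    omega
  obtain ⟨n, rfl⟩ : ∃ n, a = n + 6 := ⟨a - 6, by omega⟩
  change m < quilt (n + 7) at h₂
  have e₇ : quilt (n + 7) = quilt (n + 6) + quilt (n + 2) := quilt_add_seven n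
  have hr : m - quilt (n + 6) < m := Nat.sub_lt hm (quilt_pos (by omega))
  obtain ⟨L, hLsub, hL, hsum⟩ :=
    ih (m - quilt (n + 6)) hr (Nat.sub_pos_of_lt hlt) (i := n + 2) (by omega)
  have hLn : ∀ x ∈ L, x < n + 2 := fun x hx => (mem_Ico.1 (hLsub hx)).2
  refine ⟨insert (n + 6) L, ?_, hL.insert fun x hx => by have := hLn x hx; omega, ?_⟩
  · refine insert_subset (mem_Ico.2 ⟨by omega, hai⟩) fun x hx => ?_
    have := mem_Ico.1 (hLsub hx)
    exact mem_Ico.2 ⟨this.1, by omega⟩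
  · rw [sum_insert fun h => by have := hLn _ h; omega, hsum]
    omega

theorem isFQSeq_quilt : IsFQSeq quilt := by
  refine ⟨rfl, fun i hi => ⟨⟨quilt_pos (by omega), ?_⟩, fun m ⟨hm, hnot⟩ => ?_⟩⟩
  · rintro ⟨L, hLi, hL, hsum⟩
    exact sum_quilt_ne_quilt (by omega) hL (fun j hj => mem_Ico.2 (hLi j hj)) hsum
  · by_contra! hlt
    obtain ⟨L, hLi, hL, hsum⟩ := exists_legal_sum_eq hm hlt
    exact hnot ⟨L, fun j hj => mem_Ico.1 (hLi hj), hL, hsum⟩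

theorem fqRepr_congr {q q' : ℕ → ℕ} {i : ℕ} (h : ∀ j, 1 ≤ j → j < i → q j = q' j) (m : ℕ) :
    FQRepr q i m ↔ FQRepr q' i m := by
  refine exists_congr fun L => and_congr_right fun hLi => and_congr_right fun _ => ?_
  rw [sum_congr rfl fun j hj => h j (hLi j hj).1 (hLi j hj).2]

theorem IsFQSeq.eq_quilt {q : ℕ → ℕ} (hq : IsFQSeq q) {i : ℕ} (hi : 1 ≤ i) : q i = quilt i := by
  induction i using Nat.strong_induction_on with
  | _ i ih =>
  rcases hi.eq_or_lt with rfl | hi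
  · exact hq.1
  have hset : {m | 0 < m ∧ ¬FQRepr q i m} = {m | 0 < m ∧ ¬FQRepr quilt i m} := by
    simp only [fqRepr_congr fun j hj hji => ih j hji hj]
  exact (hq.2 i hi).unique (hset ▸ isFQSeq_quilt.2 i hi)

theorem IsGreedy6.length_le_greedyLen {q : ℕ → ℕ} (hq : ∀ i, 1 ≤ i → q i = quilt i) :
    ∀ {L : List ℕ} {m : ℕ}, IsGreedy6 q L m → L.length ≤ greedyLen m
  | [], _, _ => Nat.zero_le _
  | ℓ :: rest, m, h => by
    rcases h with ⟨rfl, hℓ, rfl⟩ | ⟨rfl, -, rfl⟩ | ⟨-, -, hℓ, h₁, h₂, hrest⟩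
    · rw [hq ℓ hℓ, greedyLen_quilt hℓ]
      rfl
    · exact (by decide : 2 ≤ greedyLen 6)
    · rw [hq ℓ hℓ] at h₁ hrest
      rw [hq _ (by omega)] at h₂
      rw [greedyLen_of_quilt_le_of_lt hℓ h₁.le h₂, List.length_cons]
      exact Nat.succ_le_succ (length_le_greedyLen hq hrest)

theorem stmt_8_general (q : ℕ → ℕ) (hq : IsFQSeq q) (m : ℕ)
    (n : ℕ) (c : ℕ → ℕ) (hc0 : c 0 = 0)
    (hsum : ∑ i ∈ Finset.range (n + 1), c i * q i = m)
    (L : List ℕ) (hL : IsGreedy6 q L m) :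
    L.length ≤ ∑ i ∈ Finset.range (n + 1), c i := by
  have hqQ : ∀ i, 1 ≤ i → q i = quilt i := fun i hi => hq.eq_quilt hi
  have hsumQ : ∑ i ∈ range (n + 1), c i * quilt i = m := by
    rw [← hsum]
    refine sum_congr rfl fun i _ => ?_
    rcases Nat.eq_zero_or_pos i with rfl | hi
    · rw [hc0, zero_mul, zero_mul]
    · rw [hqQ i hi]
  calc L.length ≤ greedyLen m := hL.length_le_greedyLen hqQ
    _ ≤ ∑ i ∈ range (n + 1), c i := hsumQ ▸ greedyLen_sum_le _ _

theorem stmt_8 (q : ℕ → ℕ) (hq : IsFQSeq q) (m : ℕ) (hm : 0 < m)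
    (n : ℕ) (c : ℕ → ℕ) (hc0 : c 0 = 0)
    (hsum : ∑ i ∈ Finset.range (n + 1), c i * q i = m)
    (L : List ℕ) (hL : IsGreedy6 q L m) :
    L.length ≤ ∑ i ∈ Finset.range (n + 1), c i :=
  stmt_8_general q hq m n c hc0 hsum L hL
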